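/- Non-associativity of date-period addition: it is not the case that for all valid dates D and periods P1, P2, (D +P P1) +P P2 = D +P (P1 + P2), where P1 + P2 is componentwise addition of periods. In particular, for D = (2020, 2, 29), P1 = (1, 0, 0), and P2 = (0, 1, 0), we have (D +P P1) +P P2 = (2021, 3, 28) while D +P (P1 + P2) = D +P (1, 1, 0) = (2021, 3, 29). -/

import Mathlib

/-- A date is a triple of integers (year, month, day). -/
structure Date where
  y : ℤ
  m : ℤ
  d : ℤ

/-- A year is a leap year iff divisible by 4 and (not by 100, or by 400). -/
def isLeap (y : ℤ) : Prop :=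
  y % 4 = 0 ∧ (y % 100 ≠ 0 ∨ y % 400 = 0)

/-- Number of days in month `m` of year `y`. -/
def nbdays (y m : ℤ) : ℤ :=
  if m = 4 ∨ m = 6 ∨ m = 9 ∨ m = 11 then 30
  else if m = 2 then
    (if y % 4 = 0 ∧ (y % 100 ≠ 0 ∨ y % 400 = 0) then 29 else 28)
  else 31

/-- A date is valid iff `1 ≤ m ≤ 12` and `1 ≤ d ≤ nbdays y m`. -/
def Date.valid (D : Date) : Prop :=
  1 ≤ D.m ∧ D.m ≤ 12 ∧ 1 ≤ D.d ∧ D.d ≤ nbdays D.y D.m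

/-- Month addition `(y, m, d) +m n`, with round-down of the day component. -/
def addMonths (D : Date) (n : ℤ) : Date :=
  ⟨D.y + (D.m - 1 + n) / 12,
   1 + (D.m - 1 + n) % 12,
   min D.d (nbdays (D.y + (D.m - 1 + n) / 12) (1 + (D.m - 1 + n) % 12))⟩

/-- A configuration of the small-step day-addition machine:
either a pending addition `D +D n`, or a finished date. -/
inductive Conf where
  | pending (D : Date) (n : ℤ)
  | done (D : Date)

/-- Small-step rules for day addition `+D`. -/
inductive Step : Conf → Conf → Prop where
  | add_days {y m d n : ℤ}
      (h1 : 1 ≤ d + n) (h2 : d + n ≤ nbdays y m) :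
      Step (Conf.pending ⟨y, m, d⟩ n) (Conf.done ⟨y, m, d + n⟩)
  | add_days_over {y m d n : ℤ}
      (h : d + n > nbdays y m) :
      Step (Conf.pending ⟨y, m, d⟩ n)
        (Conf.pending (addMonths ⟨y, m, 1⟩ 1) (n - (nbdays y m - d) - 1))
  | add_days_under1 {y m d n : ℤ}
      (h1 : 1 < d) (h2 : d + n ≤ 0) :
      Step (Conf.pending ⟨y, m, d⟩ n) (Conf.pending ⟨y, m, 1⟩ (d - 1 + n))
  | add_days_under2 {y m n y' m' : ℤ}
      (h1 : 1 + n ≤ 0) (h2 : addMonths ⟨y, m, 1⟩ (-1) = ⟨y', m', 1⟩) :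
      Step (Conf.pending ⟨y, m, 1⟩ n) (Conf.pending ⟨y', m', 1⟩ (n + nbdays y' m'))

/-- Reduction in finitely many steps. -/
def Reduces : Conf → Conf → Prop := Relation.ReflTransGen Step

instance : Nonempty Date := ⟨⟨2000, 3, 1⟩⟩

/-- `addDays D n` is the unique valid normal form of `D +D n`
(when it exists; arbitrary otherwise). -/
noncomputable def addDays (D : Date) (n : ℤ) : Date :=
  Classical.epsilon fun D' : Date =>
    D'.valid ∧ Reduces (Conf.pending D n) (Conf.done D')

/-- Date-period addition `D +P (ny, nm, nd) = (D +m (12·ny + nm)) +D nd`. -/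
noncomputable def addPeriod (D : Date) (P : ℤ × ℤ × ℤ) : Date :=
  addDays (addMonths D (12 * P.1 + P.2.1)) P.2.2

/-- Lexicographic order on dates. -/
def Date.le (a b : Date) : Prop :=
  a.y < b.y ∨ (a.y = b.y ∧ a.m < b.m) ∨ (a.y = b.y ∧ a.m = b.m ∧ a.d ≤ b.d)

/-- Strict lexicographic order on dates. -/
def Date.lt (a b : Date) : Prop :=
  a.y < b.y ∨ (a.y = b.y ∧ a.m < b.m) ∨ (a.y = b.y ∧ a.m = b.m ∧ a.d < b.d)

/-- The epoch date: March 1, 2000. -/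
def epoch : Date := ⟨2000, 3, 1⟩

/-- `toDelta D` is the unique integer `n` with `epoch +D n = D`
(when it exists; arbitrary otherwise). -/
noncomputable def toDelta (D : Date) : ℤ :=
  Classical.epsilon fun n : ℤ => addDays epoch n = D

/-! Month addition clamps the day to the length of the target month. Adding a year to
29 February 2020 therefore clamps to 28 February 2021, and the lost day is not recovered by
the following month addition, which lands on 28 March; adding the thirteen months at once
clamps nothing and lands on 29 March. With no days to add, day addition is the identity, because
the small-step rules are deterministic and a valid date `D` steps to `done D` in one step. -/

lemma nbdays_pos (y m : ℤ) : 0 < nbdays y m := by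
  unfold nbdays; split_ifs <;> norm_num

lemma addMonths_valid {D : Date} (hD : 1 ≤ D.d) (n : ℤ) : (addMonths D n).valid := by
  have := nbdays_pos (D.y + (D.m - 1 + n) / 12) (1 + (D.m - 1 + n) % 12)
  refine ⟨?_, ?_, le_min hD (by omega), min_le_right _ _⟩ <;> simp only [addMonths] <;> omega

theorem step_rightUnique : Relator.RightUnique Step := by
  intro c c₁ c₂ h₁ h₂
  cases h₁ with
  | add_days => cases h₂ <;> first | rfl | omega
  | @add_days_over y m =>
    have := nbdays_pos y m
    cases h₂ <;> first | rfl | omega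
  | @add_days_under1 y m =>
    have := nbdays_pos y m
    cases h₂ <;> first | rfl | omega
  | @add_days_under2 y m _ _ _ _ hprev =>
    cases h₂ with
    | add_days_over => have := nbdays_pos y m; omega
    | add_days_under2 _ hprev' =>
      obtain ⟨⟩ := hprev.symm.trans hprev'
      rfl
    | _ => omega

lemma Reduces.eq_of_done {c : Conf} {A B : Date}
    (hA : Reduces c (Conf.done A)) (hB : Reduces c (Conf.done B)) : A = B := by
  have done_stuck : ∀ {D : Date} {c : Conf}, ¬ Step (Conf.done D) c := nofun
  rcases Relation.ReflTransGen.total_of_right_unique step_rightUnique hA hB with h | h <;>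
    rcases Relation.ReflTransGen.cases_head h with h | ⟨_, hstep, _⟩
  · exact Conf.done.inj h
  · exact (done_stuck hstep).elim
  · exact (Conf.done.inj h).symm
  · exact (done_stuck hstep).elim

lemma addDays_eq_of_reduces {D D' : Date} {n : ℤ} (hD' : D'.valid)
    (h : Reduces (Conf.pending D n) (Conf.done D')) : addDays D n = D' :=
  (Classical.epsilon_spec (p := fun X : Date => X.valid ∧ Reduces (Conf.pending D n) (Conf.done X))
    ⟨D', hD', h⟩).2.eq_of_done h

lemma addDays_zero {D : Date} (hD : D.valid) : addDays D 0 = D := by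
  obtain ⟨-, -, hd₁, hd₂⟩ := id hD
  refine addDays_eq_of_reduces hD (.single ?_)
  simpa using Step.add_days (y := D.y) (m := D.m) (d := D.d) (n := 0) (by omega) (by omega)

lemma addPeriod_of_days_eq_zero {D : Date} (hD : 1 ≤ D.d) (ny nm : ℤ) :
    addPeriod D (ny, nm, 0) = addMonths D (12 * ny + nm) :=
  addDays_zero (addMonths_valid hD _)

/-- **Non-associativity of date-period addition**: it is not the case that
`(D +P P1) +P P2 = D +P (P1 + P2)` (componentwise sum of periods) for all valid dates
`D` and periods `P1, P2`; in particular, for `D = (2020, 2, 29)`, `P1 = (1, 0, 0)`,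
`P2 = (0, 1, 0)` the left side is `(2021, 3, 28)` while the right side is
`(2021, 3, 29)`. -/
theorem addPeriod_not_associative :
    (¬ ∀ (D : Date) (P1 P2 : ℤ × ℤ × ℤ), D.valid →
      addPeriod (addPeriod D P1) P2 = addPeriod D (P1 + P2)) ∧
    addPeriod (addPeriod ⟨2020, 2, 29⟩ (1, 0, 0)) (0, 1, 0) = ⟨2021, 3, 28⟩ ∧
    addPeriod ⟨2020, 2, 29⟩ ((1, 0, 0) + (0, 1, 0)) = ⟨2021, 3, 29⟩ := by
  have one_year : addPeriod ⟨2020, 2, 29⟩ (1, 0, 0) = ⟨2021, 2, 28⟩ := by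
    rw [addPeriod_of_days_eq_zero (by norm_num)]
    norm_num [addMonths, nbdays]
  have next_month : addPeriod ⟨2021, 2, 28⟩ (0, 1, 0) = ⟨2021, 3, 28⟩ := by
    rw [addPeriod_of_days_eq_zero (by norm_num)]
    norm_num [addMonths, nbdays]
  have thirteen_months : addPeriod ⟨2020, 2, 29⟩ ((1, 0, 0) + (0, 1, 0)) = ⟨2021, 3, 29⟩ := by
    rw [show ((1, 0, 0) + (0, 1, 0) : ℤ × ℤ × ℤ) = (1, 1, 0) from rfl,
      addPeriod_of_days_eq_zero (by norm_num)]
    norm_num [addMonths, nbdays]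
  refine ⟨fun h => ?_, by rw [one_year, next_month], thirteen_months⟩
  have := h ⟨2020, 2, 29⟩ (1, 0, 0) (0, 1, 0) (by norm_num [Date.valid, nbdays])
  rw [one_year, next_month, thirteen_months] at this
  exact absurd (congrArg Date.d this) (by norm_num)
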